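/- arXiv:1011.3781 — 2 statements merged into one kernel-verified Lean document; each statement's English description precedes it below -/
import Mathlib

section
/- Let Σ be an n×n real symmetric positive semidefinite matrix and 0 ≤ ρ ≤ max_{1≤i≤n} Σ_{ii}. Then sup_{‖z‖₂≤1} (zᵀΣz − ρ·Card(z)) = max_{u ∈ {0,1}ⁿ} ( λ_max(diag(u) Σ diag(u)) − ρ·∑_{i=1}^n u_i ), where diag(u) is the diagonal matrix with u on the diagonal and λ_max denotes the largest eigenvalue. -/
open Matrix

/-- The largest eigenvalue of a matrix, as the supremum of its (real) eigenvalues. -/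
noncomputable def lambdaMax {n : ℕ} (M : Matrix (Fin n) (Fin n) ℝ) : ℝ :=
  sSup {t : ℝ | ∃ v : Fin n → ℝ, v ≠ 0 ∧ M.mulVec v = t • v}

open Classical in
/-- `card z` is the number of nonzero coefficients of the vector `z`. -/
noncomputable def card {n : ℕ} (z : Fin n → ℝ) : ℕ :=
  (Finset.univ.filter fun i => z i ≠ 0).card

open Classical in
/-- `trPlus M` is the sum of the positive parts of the eigenvalues of a symmetric matrix `M`. -/
noncomputable def trPlus {n : ℕ} (M : Matrix (Fin n) (Fin n) ℝ) : ℝ :=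
  if h : M.IsHermitian then ∑ i, max (h.eigenvalues i) 0 else 0

open Classical in
/-- `matSqrt X` is the positive semidefinite square root of a positive semidefinite matrix. -/
noncomputable def matSqrt {n : ℕ} (X : Matrix (Fin n) (Fin n) ℝ) : Matrix (Fin n) (Fin n) ℝ :=
  if h : X.PosSemidef then
    (h.1.eigenvectorUnitary : Matrix (Fin n) (Fin n) ℝ) * diagonal ((↑) ∘ (√·) ∘ h.1.eigenvalues) *
      (star h.1.eigenvectorUnitary : Matrix (Fin n) (Fin n) ℝ)
  else 0

private lemma rayleigh_le {n : ℕ} {M : Matrix (Fin n) (Fin n) ℝ} (hM : M.IsHermitian)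
    {lam : ℝ} (hlam : ∀ i, hM.eigenvalues i ≤ lam) (v : Fin n → ℝ) :
    v ⬝ᵥ M *ᵥ v ≤ lam * ∑ i, v i ^ 2 := by
  classical
  set U : Matrix (Fin n) (Fin n) ℝ := (hM.eigenvectorUnitary : Matrix (Fin n) (Fin n) ℝ) with hUdef
  have hU : U * star U = 1 := (Matrix.mem_unitaryGroup_iff).mp hM.eigenvectorUnitary.2
  set d : Fin n → ℝ := hM.eigenvalues with hddef
  set w : Fin n → ℝ := star U *ᵥ v with hwdef
  have hsU : star U = Uᵀ := by
    rw [Matrix.star_eq_conjTranspose, Matrix.conjTranspose_eq_transpose_of_trivial]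
  have hspec : M = U * diagonal d * star U := by
    have := hM.spectral_theorem
    simpa [RCLike.ofReal_real_eq_id] using this
  have hv : v ᵥ* U = w := by
    rw [hwdef, hsU, ← vecMul_transpose, transpose_transpose]
  have h1 : v ⬝ᵥ M *ᵥ v = ∑ i, d i * w i ^ 2 := by
    rw [hspec, ← mulVec_mulVec, ← mulVec_mulVec, dotProduct_mulVec, hv, dotProduct_mulVec]
    simp [vecMul_diagonal, dotProduct]
    exact Finset.sum_congr rfl fun i _ => by ring
  have h2 : ∑ i, w i ^ 2 = ∑ i, v i ^ 2 := by
    have : w ⬝ᵥ w = v ⬝ᵥ v := by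
      rw [hwdef, hsU, dotProduct_mulVec, ← vecMul_transpose, transpose_transpose,
        ]
      rw [vecMul_vecMul, ← hsU, hU, vecMul_one]
    simpa [dotProduct, pow_two] using this
  calc v ⬝ᵥ M *ᵥ v = ∑ i, d i * w i ^ 2 := h1
    _ ≤ ∑ i, lam * w i ^ 2 :=
        Finset.sum_le_sum fun i _ => mul_le_mul_of_nonneg_right (hlam i) (sq_nonneg _)
    _ = lam * ∑ i, v i ^ 2 := by rw [← Finset.mul_sum, h2]

private lemma sum_sq_eigenvectorBasis {n : ℕ} {M : Matrix (Fin n) (Fin n) ℝ}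
    (hM : M.IsHermitian) (j : Fin n) :
    ∑ i, (⇑(hM.eigenvectorBasis j) i) ^ 2 = 1 := by
  have h := hM.eigenvectorBasis.orthonormal.1 j
  rw [EuclideanSpace.norm_eq] at h
  have h2 : ∑ i, ‖⇑(hM.eigenvectorBasis j) i‖ ^ 2 = 1 := by
    have := congrArg (· ^ 2) h
    simpa [Real.sq_sqrt (Finset.sum_nonneg fun i _ => sq_nonneg _)] using this
  simpa [Real.norm_eq_abs, sq_abs] using h2

private lemma lambdaMax_eq_of {n : ℕ} [Nonempty (Fin n)] {M : Matrix (Fin n) (Fin n) ℝ}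
    (hM : M.IsHermitian) {lam : ℝ} (hub : ∀ i, hM.eigenvalues i ≤ lam)
    {j : Fin n} (h0 : hM.eigenvalues j = lam) :
    lambdaMax M = lam := by
  apply IsGreatest.csSup_eq
  constructor
  · refine ⟨⇑(hM.eigenvectorBasis j), ?_, by rw [hM.mulVec_eigenvectorBasis, h0]⟩
    intro h
    have := hM.eigenvectorBasis.orthonormal.ne_zero j
    exact this (by ext i; exact congrFun h i)
  · rintro t ⟨v, hv, hvt⟩
    have hpos : 0 < ∑ i, v i ^ 2 := by
      obtain ⟨i, hi⟩ := Function.ne_iff.mp hv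
      exact Finset.sum_pos' (fun i _ => sq_nonneg _)
        ⟨i, Finset.mem_univ i, lt_of_le_of_ne (sq_nonneg _) (Ne.symm (pow_ne_zero 2 hi))⟩
    have hr := rayleigh_le hM hub v
    rw [hvt] at hr
    have : t * ∑ i, v i ^ 2 ≤ lam * ∑ i, v i ^ 2 := by
      refine le_trans (le_of_eq ?_) hr
      simp [dotProduct, pow_two, Finset.mul_sum]
      exact Finset.sum_congr rfl fun i _ => by ring
    exact le_of_mul_le_mul_right (by simpa [mul_comm] using this) hpos

private lemma binary_facts {n : ℕ} [Nonempty (Fin n)] (S : Matrix (Fin n) (Fin n) ℝ)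
    (hS : S.PosSemidef) (u : Fin n → ℝ) :
    ∃ lam : ℝ, lambdaMax (diagonal u * S * diagonal u) = lam ∧ 0 ≤ lam ∧
      (∀ x : Fin n → ℝ, (diagonal u *ᵥ x) ⬝ᵥ S *ᵥ (diagonal u *ᵥ x) ≤ lam * ∑ i, x i ^ 2) ∧
      ∃ v : Fin n → ℝ, (∑ i, v i ^ 2 = 1) ∧
        (diagonal u *ᵥ v) ⬝ᵥ S *ᵥ (diagonal u *ᵥ v) = lam := by
  classical
  set D := diagonal u with hD
  have hMpsd : (D * S * D).PosSemidef := by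
    have := hS.mul_mul_conjTranspose_same D
    rwa [show Dᴴ = D by
      rw [conjTranspose_eq_transpose_of_trivial, hD, diagonal_transpose]] at this
  have hM := hMpsd.1
  obtain ⟨j, -, hj⟩ := Finset.exists_max_image Finset.univ hM.eigenvalues
    ⟨Classical.arbitrary (Fin n), Finset.mem_univ _⟩
  set lam := hM.eigenvalues j with hlam
  have hub : ∀ i, hM.eigenvalues i ≤ lam := fun i => hj i (Finset.mem_univ i)
  have hconj : ∀ x : Fin n → ℝ,
      (D *ᵥ x) ⬝ᵥ S *ᵥ (D *ᵥ x) = x ⬝ᵥ (D * S * D) *ᵥ x := by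
    intro x
    conv_rhs => rw [← mulVec_mulVec, ← mulVec_mulVec, dotProduct_mulVec]
    congr 1
    funext i
    rw [hD, vecMul_diagonal, mulVec_diagonal, mul_comm]
  refine ⟨lam, lambdaMax_eq_of hM hub rfl, hMpsd.eigenvalues_nonneg j, ?_, ?_⟩
  · intro x
    rw [hconj]
    exact rayleigh_le hM hub x
  · refine ⟨⇑(hM.eigenvectorBasis j), sum_sq_eigenvectorBasis hM j, ?_⟩
    rw [hconj, hM.mulVec_eigenvectorBasis, dotProduct_smul, smul_eq_mul,
      show (⇑(hM.eigenvectorBasis j) ⬝ᵥ ⇑(hM.eigenvectorBasis j))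
          = ∑ i, (⇑(hM.eigenvectorBasis j) i) ^ 2 from by simp [dotProduct, pow_two],
      sum_sq_eigenvectorBasis hM j, mul_one]

/-- for `0 ≤ ρ ≤ max_i Σ_ii`, the sparse PCA value equals the maximum over
binary vectors `u ∈ {0,1}ⁿ` of `λ_max(diag(u) Σ diag(u)) − ρ·1ᵀu`. -/
theorem sparsePCA_eq_max_over_binary_patterns {n : ℕ}
    (S : Matrix (Fin n) (Fin n) ℝ) (hS : S.PosSemidef)
    (ρ : ℝ) (hρ0 : 0 ≤ ρ) (hρ : ∃ i, ρ ≤ S i i) :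
    IsGreatest
      {v : ℝ | ∃ u : Fin n → ℝ, (∀ i, u i = 0 ∨ u i = 1) ∧
        v = lambdaMax (diagonal u * S * diagonal u) - ρ * ∑ i, u i}
      (sSup {v : ℝ | ∃ z : Fin n → ℝ, ∑ i, (z i) ^ 2 ≤ 1 ∧
        v = z ⬝ᵥ S.mulVec z - ρ * (card z : ℝ)}) := by
  classical
  obtain ⟨i₀, hi₀⟩ := hρ
  have : Nonempty (Fin n) := ⟨i₀⟩
  set B := {v : ℝ | ∃ u : Fin n → ℝ, (∀ i, u i = 0 ∨ u i = 1) ∧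
    v = lambdaMax (diagonal u * S * diagonal u) - ρ * ∑ i, u i} with hBdef
  set A := {v : ℝ | ∃ z : Fin n → ℝ, ∑ i, (z i) ^ 2 ≤ 1 ∧
    v = z ⬝ᵥ S.mulVec z - ρ * (card z : ℝ)} with hAdef
  have hBfin : B.Finite := by
    have hsub : B ⊆ (fun u : Fin n → ℝ =>
        lambdaMax (diagonal u * S * diagonal u) - ρ * ∑ i, u i) ''
        (Set.univ.pi fun _ : Fin n => ({0, 1} : Set ℝ)) := by
      rintro v ⟨u, hu, rfl⟩
      exact ⟨u, fun i _ => hu i, rfl⟩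
    exact (Set.Finite.image _
      (Set.Finite.pi fun _ => (Set.finite_singleton (1 : ℝ)).insert 0)).subset hsub
  have hBne : B.Nonempty := ⟨_, 0, fun i => Or.inl rfl, rfl⟩
  set m := sSup B with hm
  have hmB : m ∈ B := Set.Nonempty.csSup_mem hBne hBfin
  have hBbdd : BddAbove B := hBfin.bddAbove
  have hBA : ∀ b ∈ B, ∃ a ∈ A, b ≤ a := by
    rintro b ⟨u, hu, rfl⟩
    obtain ⟨lam, hlmax, hlam0, hray, v, hv1, hvlam⟩ := binary_facts S hS u
    refine ⟨(diagonal u *ᵥ v) ⬝ᵥ S *ᵥ (diagonal u *ᵥ v) - ρ * (card (diagonal u *ᵥ v) : ℝ),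
      ⟨diagonal u *ᵥ v, ?_, rfl⟩, ?_⟩
    · calc ∑ i, ((diagonal u *ᵥ v) i) ^ 2 ≤ ∑ i, v i ^ 2 := by
            refine Finset.sum_le_sum fun i _ => ?_
            rw [mulVec_diagonal]
            rcases hu i with h | h <;> simp [h, sq_nonneg]
        _ = 1 := hv1
    · have hcard : (card (diagonal u *ᵥ v) : ℝ) ≤ ∑ i, u i := by
        rw [card, Finset.card_filter]
        push_cast
        refine Finset.sum_le_sum fun i _ => ?_
        by_cases h : (diagonal u *ᵥ v) i = 0
        · rcases hu i with h' | h' <;> simp [h, h']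
        · simp only [h, if_pos, ne_eq, not_false_eq_true, if_true]
          rcases hu i with h' | h'
          · exact absurd (by rw [mulVec_diagonal, h', zero_mul]) h
          · rw [h']
      rw [hlmax, hvlam]
      nlinarith [mul_le_mul_of_nonneg_left hcard hρ0]
  have hAub : ∀ a ∈ A, a ≤ m := by
    rintro a ⟨z, hz1, rfl⟩
    set u : Fin n → ℝ := fun i => if z i = 0 then 0 else 1 with hu
    have hub : ∀ i, u i = 0 ∨ u i = 1 := fun i => by
      by_cases h : z i = 0 <;> simp [hu, h]
    obtain ⟨lam, hlmax, hlam0, hray, -⟩ := binary_facts S hS u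
    have hDz : diagonal u *ᵥ z = z := by
      funext i
      rw [mulVec_diagonal]
      by_cases h : z i = 0 <;> simp [hu, h]
    have h1 : z ⬝ᵥ S *ᵥ z ≤ lam := by
      have hr := hray z
      rw [hDz] at hr
      calc z ⬝ᵥ S *ᵥ z ≤ lam * ∑ i, z i ^ 2 := hr
        _ ≤ lam * 1 := mul_le_mul_of_nonneg_left hz1 hlam0
        _ = lam := mul_one lam
    have h2 : (card z : ℝ) = ∑ i, u i := by
      rw [card, Finset.card_filter]
      push_cast
      refine Finset.sum_congr rfl fun i _ => ?_
      by_cases h : z i = 0 <;> simp [hu, h]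
    have hmem : lam - ρ * ∑ i, u i ∈ B := ⟨u, hub, by rw [hlmax]⟩
    have hlem : lam - ρ * ∑ i, u i ≤ m := le_csSup hBbdd hmem
    rw [h2]
    linarith
  have hAne : A.Nonempty := ⟨_, (0 : Fin n → ℝ), by simp, rfl⟩
  have hAbdd : BddAbove A := ⟨m, fun a ha => hAub a ha⟩
  have hle : sSup A ≤ m := csSup_le hAne hAub
  have hge : m ≤ sSup A := by
    obtain ⟨a, haA, hma⟩ := hBA m hmB
    exact hma.trans (le_csSup hAbdd haA)
  have heq : sSup A = m := le_antisymm hle hge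
  rw [heq]
  exact ⟨hmB, fun b hb => le_csSup hBbdd hb⟩
end

section
/- Let X ∈ 𝕊ₙ be symmetric positive semidefinite and B ∈ 𝕊ₙ symmetric. Then Tr₊(X^{1/2} B X^{1/2}) = max { Tr(PB) : P ∈ 𝕊ₙ, 0 ⪯ P ⪯ X }, where 0 ⪯ P ⪯ X means P and X − P are positive semidefinite. -/
open Matrix

section Helpers

variable {n : ℕ}

/-- trace formula: `(Q * M).trace = ∑ i, (Uᴴ Q U)ᵢᵢ * λᵢ` for `M` Hermitian. -/
lemma trace_mul_herm_eq {M Q : Matrix (Fin n) (Fin n) ℝ} (hM : M.IsHermitian) :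
    (Q * M).trace
      = ∑ i, ((star (hM.eigenvectorUnitary : Matrix (Fin n) (Fin n) ℝ)) * Q *
          (hM.eigenvectorUnitary : Matrix (Fin n) (Fin n) ℝ)) i i * hM.eigenvalues i := by
  set U : Matrix (Fin n) (Fin n) ℝ := (hM.eigenvectorUnitary : Matrix (Fin n) (Fin n) ℝ)
  have hspec : M = U * diagonal (RCLike.ofReal ∘ hM.eigenvalues) * star U :=
    hM.spectral_theorem
  conv_lhs => rw [hspec]
  have h1 : Q * (U * diagonal (RCLike.ofReal ∘ hM.eigenvalues) * star U)
      = (Q * U) * diagonal (RCLike.ofReal ∘ hM.eigenvalues) * star U := by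
    simp only [Matrix.mul_assoc]
  rw [h1, trace_mul_cycle]
  have h2 : star U * (Q * U) * diagonal (RCLike.ofReal ∘ hM.eigenvalues)
      = (star U * Q * U) * diagonal (RCLike.ofReal ∘ hM.eigenvalues) := by
    simp only [Matrix.mul_assoc]
  rw [h2, Matrix.trace]
  simp [Matrix.mul_diagonal, Matrix.diag]

/-- Diagonal entries of a PSD matrix are nonnegative. -/
lemma psd_diag_nonneg {A : Matrix (Fin n) (Fin n) ℝ} (hA : A.PosSemidef) (i : Fin n) :
    0 ≤ A i i := by
  have := hA.dotProduct_mulVec_nonneg (Pi.single i 1)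
  simpa [dotProduct, mulVec, Pi.single_apply] using this

/-- If `0 ⪯ Q ⪯ 1` and `M` is Hermitian, then `Tr(QM) ≤ ∑ max(λᵢ, 0)`. -/
lemma trace_mul_le_trPlus {M Q : Matrix (Fin n) (Fin n) ℝ} (hM : M.IsHermitian)
    (hQ : Q.PosSemidef) (hQ1 : (1 - Q).PosSemidef) :
    (Q * M).trace ≤ ∑ i, max (hM.eigenvalues i) 0 := by
  set U : Matrix (Fin n) (Fin n) ℝ := (hM.eigenvectorUnitary : Matrix (Fin n) (Fin n) ℝ)
    with hUdef
  have hsUU : star U * U = 1 := Unitary.coe_star_mul_self hM.eigenvectorUnitary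
  rw [trace_mul_herm_eq hM]
  have hpsd : (star U * Q * U).PosSemidef := by
    have := hQ.mul_mul_conjTranspose_same (star U)
    simpa [Matrix.star_eq_conjTranspose] using this
  have hpsd1 : (1 - star U * Q * U).PosSemidef := by
    have := hQ1.mul_mul_conjTranspose_same (star U)
    have h1 : star U * (1 - Q) * (star U)ᴴ = 1 - star U * Q * U := by
      have h2 : (star U)ᴴ = U := by
        rw [← Matrix.star_eq_conjTranspose, star_star]
      rw [h2, Matrix.mul_sub, Matrix.sub_mul, Matrix.mul_one, hsUU]
    rwa [h1] at this
  apply Finset.sum_le_sum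
  intro i _
  have h0 : 0 ≤ (star U * Q * U) i i := psd_diag_nonneg hpsd i
  have h1 : (star U * Q * U) i i ≤ 1 := by
    have := psd_diag_nonneg hpsd1 i
    simp only [Matrix.sub_apply, Matrix.one_apply_eq] at this
    linarith
  rcases le_total (hM.eigenvalues i) 0 with h | h
  · calc (star U * Q * U) i i * hM.eigenvalues i ≤ 0 :=
          mul_nonpos_of_nonneg_of_nonpos h0 h
      _ ≤ max (hM.eigenvalues i) 0 := le_max_right _ _
  · calc (star U * Q * U) i i * hM.eigenvalues i ≤ 1 * hM.eigenvalues i :=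
          mul_le_mul_of_nonneg_right h1 h
      _ = hM.eigenvalues i := one_mul _
      _ ≤ max (hM.eigenvalues i) 0 := le_max_left _ _

lemma conj_diag_mul {W : Matrix (Fin n) (Fin n) ℝ} (hW : star W * W = 1) (a b : Fin n → ℝ) :
    (W * diagonal a * star W) * (W * diagonal b * star W)
      = W * diagonal (fun i => a i * b i) * star W := by
  have h1 : (W * diagonal a * star W) * (W * diagonal b * star W)
      = W * (diagonal a * (star W * W) * diagonal b) * star W := by
    simp only [Matrix.mul_assoc]
  rw [h1, hW, Matrix.mul_one, Matrix.diagonal_mul_diagonal]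

lemma conj_diag_herm (W : Matrix (Fin n) (Fin n) ℝ) (a : Fin n → ℝ) :
    (W * diagonal a * star W).IsHermitian := by
  unfold Matrix.IsHermitian
  rw [Matrix.conjTranspose_mul, Matrix.conjTranspose_mul, Matrix.diagonal_conjTranspose,
    ← Matrix.star_eq_conjTranspose, ← Matrix.star_eq_conjTranspose, star_star]
  simp [Matrix.mul_assoc, star_trivial]

lemma conj_diag_psd (W : Matrix (Fin n) (Fin n) ℝ) {a : Fin n → ℝ} (ha : ∀ i, 0 ≤ a i) :
    (W * diagonal a * star W).PosSemidef := by
  have := (Matrix.posSemidef_diagonal_iff.mpr ha).mul_mul_conjTranspose_same W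
  rwa [← Matrix.star_eq_conjTranspose] at this

lemma dot_sym_mulVec {A : Matrix (Fin n) (Fin n) ℝ} (hA : Aᵀ = A) (x u : Fin n → ℝ) :
    x ⬝ᵥ (A *ᵥ u) = (A *ᵥ x) ⬝ᵥ u := by
  rw [dotProduct_mulVec, ← Matrix.mulVec_transpose, hA]

end Helpers

/-- `Tr₊(X^{1/2} B X^{1/2}) = max { Tr(PB) : 0 ⪯ P ⪯ X }`. -/
theorem trPlus_eq_max_trace_over_sandwiched {n : ℕ}
    (X B : Matrix (Fin n) (Fin n) ℝ) (hX : X.PosSemidef) (hB : B.IsHermitian) :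
    IsGreatest
      {t : ℝ | ∃ P : Matrix (Fin n) (Fin n) ℝ,
        P.PosSemidef ∧ (X - P).PosSemidef ∧ t = (P * B).trace}
      (trPlus (matSqrt X * B * matSqrt X)) := by
  classical
  have hms : matSqrt X = (hX.1.eigenvectorUnitary : Matrix (Fin n) (Fin n) ℝ) *
      diagonal ((↑) ∘ (√·) ∘ hX.1.eigenvalues) *
      (star hX.1.eigenvectorUnitary : Matrix (Fin n) (Fin n) ℝ) := dif_pos hX
  set S : Matrix (Fin n) (Fin n) ℝ := (hX.1.eigenvectorUnitary : Matrix (Fin n) (Fin n) ℝ) *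
      diagonal ((↑) ∘ (√·) ∘ hX.1.eigenvalues) *
      (star hX.1.eigenvectorUnitary : Matrix (Fin n) (Fin n) ℝ) with hSdef
  have hS : S.PosSemidef := conj_diag_psd _ (fun i => Real.sqrt_nonneg _)
  have hSH : Sᴴ = S := hS.1
  have hSS : S * S = X := by
    have hsVV0 : star (hX.1.eigenvectorUnitary : Matrix (Fin n) (Fin n) ℝ) *
        (hX.1.eigenvectorUnitary : Matrix (Fin n) (Fin n) ℝ) = 1 :=
      Unitary.coe_star_mul_self hX.1.eigenvectorUnitary
    have := conj_diag_mul hsVV0 (fun i => Real.sqrt (hX.1.eigenvalues i))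
      (fun i => Real.sqrt (hX.1.eigenvalues i))
    refine this.trans (Eq.trans ?_ hX.1.spectral_theorem.symm)
    have hfg : (fun i => Real.sqrt (hX.1.eigenvalues i) * Real.sqrt (hX.1.eigenvalues i))
        = (RCLike.ofReal ∘ hX.1.eigenvalues : Fin n → ℝ) := by
      funext i; simp [Real.mul_self_sqrt (hX.eigenvalues_nonneg i)]
    rw [hfg]
    rfl
  have hM : (S * B * S).IsHermitian := by
    unfold Matrix.IsHermitian
    rw [Matrix.conjTranspose_mul (S * B) S, Matrix.conjTranspose_mul S B, hSH, hB.eq]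
    simp [Matrix.mul_assoc]
  set M : Matrix (Fin n) (Fin n) ℝ := S * B * S with hMdef
  have htp : trPlus (matSqrt X * B * matSqrt X) = ∑ i, max (hM.eigenvalues i) 0 := by
    rw [hms]
    exact dif_pos hM
  rw [htp]
  set U : Matrix (Fin n) (Fin n) ℝ := (hM.eigenvectorUnitary : Matrix (Fin n) (Fin n) ℝ)
    with hUdef
  have hsUU : star U * U = 1 := Unitary.coe_star_mul_self hM.eigenvectorUnitary
  have hUsU : U * star U = 1 := Unitary.coe_mul_star_self hM.eigenvectorUnitary
  constructor
  · -- membership: the maximizer `S Q S` with `Q` the projection onto positive eigenspace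
    set c : Fin n → ℝ := fun i => if 0 < hM.eigenvalues i then 1 else 0 with hcdef
    set Q : Matrix (Fin n) (Fin n) ℝ := U * diagonal c * star U with hQdef
    have hQpsd : Q.PosSemidef := conj_diag_psd U (fun i => by positivity)
    have hQ1 : (1 : Matrix (Fin n) (Fin n) ℝ) - Q = U * diagonal (fun i => 1 - c i) * star U := by
      have h1 : (diagonal (fun i => 1 - c i) : Matrix (Fin n) (Fin n) ℝ)
          = 1 - diagonal c := by
        rw [← Matrix.diagonal_one, ← Matrix.diagonal_sub]
      rw [h1, Matrix.mul_sub, Matrix.sub_mul, Matrix.mul_one, hUsU]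
    have hQ1psd : ((1 : Matrix (Fin n) (Fin n) ℝ) - Q).PosSemidef := by
      rw [hQ1]
      refine conj_diag_psd U (fun i => ?_)
      by_cases h : 0 < hM.eigenvalues i <;> simp [hcdef, h]
    refine ⟨S * Q * S, ?_, ?_, ?_⟩
    · have := hQpsd.mul_mul_conjTranspose_same S
      rwa [hSH] at this
    · have hXQ : X - S * Q * S = S * (1 - Q) * S := by
        rw [Matrix.mul_sub, Matrix.sub_mul, Matrix.mul_one, hSS]
      rw [hXQ]
      have := hQ1psd.mul_mul_conjTranspose_same S
      rwa [hSH] at this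
    · -- trace value
      have hcyc : (S * Q * S * B).trace = (Q * M).trace := by
        calc (S * Q * S * B).trace = ((S * Q) * (S * B)).trace := by
              simp only [Matrix.mul_assoc]
          _ = ((S * B) * (S * Q)).trace := Matrix.trace_mul_comm _ _
          _ = ((S * B * S) * Q).trace := by simp only [Matrix.mul_assoc]
          _ = (Q * M).trace := Matrix.trace_mul_comm _ _
      rw [hcyc, trace_mul_herm_eq hM]
      have hQU : star U * Q * U = diagonal c := by
        have h1 : star U * Q * U = (star U * U) * diagonal c * (star U * U) := by
          simp only [hQdef, Matrix.mul_assoc]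
        rw [h1, hsUU, Matrix.one_mul, Matrix.mul_one]
      rw [hQU]
      apply Finset.sum_congr rfl
      intro i _
      rw [Matrix.diagonal_apply_eq]
      by_cases h : 0 < hM.eigenvalues i
      · simp [hcdef, h, max_eq_left (le_of_lt h)]
      · push_neg at h
        simp [hcdef, not_lt.mpr h, max_eq_right h]
  · -- upper bound
    rintro t ⟨P, hP, hXP, rfl⟩
    set V : Matrix (Fin n) (Fin n) ℝ := (hX.1.eigenvectorUnitary : Matrix (Fin n) (Fin n) ℝ)
      with hVdef
    have hsVV : star V * V = 1 := Unitary.coe_star_mul_self hX.1.eigenvectorUnitary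
    have hVsV : V * star V = 1 := Unitary.coe_mul_star_self hX.1.eigenvectorUnitary
    set μ : Fin n → ℝ := hX.1.eigenvalues with hmudef
    have hmu0 : ∀ i, 0 ≤ μ i := hX.eigenvalues_nonneg
    have hSV : S = V * diagonal (fun i => Real.sqrt (μ i)) * star V := rfl
    set g : Fin n → ℝ := fun i => if μ i = 0 then 0 else (Real.sqrt (μ i))⁻¹ with hgdef
    set e : Fin n → ℝ := fun i => if μ i = 0 then 0 else 1 with hedef
    set R : Matrix (Fin n) (Fin n) ℝ := V * diagonal g * star V with hRdef
    set Pi' : Matrix (Fin n) (Fin n) ℝ := V * diagonal e * star V with hPidef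
    have hge : (fun i => g i * Real.sqrt (μ i)) = e := by
      funext i
      by_cases h : μ i = 0
      · simp [hgdef, hedef, h]
      · have hpos : 0 < μ i := lt_of_le_of_ne (hmu0 i) (Ne.symm h)
        have hs : Real.sqrt (μ i) ≠ 0 := ne_of_gt (Real.sqrt_pos.mpr hpos)
        simp [hgdef, hedef, h, inv_mul_cancel₀ hs]
    have hRS : R * S = Pi' := by
      rw [hRdef, hSV, conj_diag_mul hsVV, hge]
    have hSR : S * R = Pi' := by
      rw [hRdef, hSV, conj_diag_mul hsVV]
      rw [show (fun i => Real.sqrt (μ i) * g i) = e by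
        funext i; rw [mul_comm]; exact congrFun hge i]
    have hRH : Rᴴ = R := conj_diag_herm V g
    have hPiH : Pi'ᴴ = Pi' := conj_diag_herm V e
    have hRT : Rᵀ = R := by
      ext i j
      have h1 : Rᴴ i j = R i j := by rw [hRH]
      simpa [Matrix.conjTranspose_apply, Matrix.transpose_apply] using h1
    have hPiPi : Pi' * Pi' = Pi' := by
      rw [hPidef, conj_diag_mul hsVV]
      rw [show (fun i => e i * e i) = e by
        funext i; by_cases h : μ i = 0 <;> simp [hedef, h]]
    have hPi1 : ((1 : Matrix (Fin n) (Fin n) ℝ) - Pi').PosSemidef := by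
      have h1 : (1 : Matrix (Fin n) (Fin n) ℝ) - Pi'
          = V * diagonal (fun i => 1 - e i) * star V := by
        have h2 : (diagonal (fun i => 1 - e i) : Matrix (Fin n) (Fin n) ℝ)
            = 1 - diagonal e := by
          rw [← Matrix.diagonal_one, ← Matrix.diagonal_sub]
        rw [h2, Matrix.mul_sub, Matrix.sub_mul, Matrix.mul_one, hVsV]
      rw [h1]
      refine conj_diag_psd V (fun i => ?_)
      by_cases h : μ i = 0 <;> simp [hedef, h]
    have hXspec : X = V * diagonal μ * star V := hX.1.spectral_theorem
    have hXPi : X * Pi' = X := by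
      conv_lhs => rw [hXspec, hPidef, conj_diag_mul hsVV]
      rw [show (fun i => μ i * e i) = μ by
        funext i; by_cases h : μ i = 0 <;> simp [hedef, h]]
      exact hXspec.symm
    have hX1Pi : X * (1 - Pi') = 0 := by
      rw [Matrix.mul_sub, Matrix.mul_one, hXPi, sub_self]
    have hker : ∀ w : Fin n → ℝ, X *ᵥ w = 0 → P *ᵥ w = 0 := by
      intro w hw
      have h1 : 0 ≤ star w ⬝ᵥ (X - P) *ᵥ w := hXP.dotProduct_mulVec_nonneg w
      have h2 : 0 ≤ star w ⬝ᵥ P *ᵥ w := hP.dotProduct_mulVec_nonneg w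
      have h3 : star w ⬝ᵥ X *ᵥ w = 0 := by rw [hw, dotProduct_zero]
      have h4 : star w ⬝ᵥ P *ᵥ w = 0 := by
        have h5 : star w ⬝ᵥ (X - P) *ᵥ w = star w ⬝ᵥ X *ᵥ w - star w ⬝ᵥ P *ᵥ w := by
          rw [Matrix.sub_mulVec, dotProduct_sub]
        rw [h5, h3] at h1
        linarith
      exact (hP.dotProduct_mulVec_zero_iff w).mp h4
    have hP1Pi : P * (1 - Pi') = 0 := by
      ext i j
      have hcol : X *ᵥ (fun k => (1 - Pi') k j) = 0 := by
        funext i'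
        have h1 := congrFun (congrFun hX1Pi i') j
        simpa [Matrix.mul_apply, Matrix.mulVec, dotProduct] using h1
      have h2 := congrFun (hker _ hcol) i
      simpa [Matrix.mul_apply, Matrix.mulVec, dotProduct] using h2
    have hPPi : P * Pi' = P := by
      have h1 := hP1Pi
      rw [Matrix.mul_sub, Matrix.mul_one, sub_eq_zero] at h1
      exact h1.symm
    have hPiP : Pi' * P = P := by
      calc Pi' * P = (P * Pi')ᴴ := by
            rw [Matrix.conjTranspose_mul, hPiH, hP.1]
        _ = P := by rw [hPPi, hP.1]
    set Q : Matrix (Fin n) (Fin n) ℝ := R * P * R with hQdef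
    have hQpsd : Q.PosSemidef := by
      have := hP.conjTranspose_mul_mul_same R
      rwa [hRH] at this
    have hSQS : S * Q * S = P := by
      have h1 : S * Q * S = (S * R) * (P * (R * S)) := by
        simp only [hQdef, Matrix.mul_assoc]
      rw [h1, hSR, hRS, hPPi, hPiP]
    have hRXR : R * X * R = Pi' := by
      have h1 : R * X * R = (R * S) * (S * R) := by
        rw [← hSS]; simp only [Matrix.mul_assoc]
      rw [h1, hRS, hSR, hPiPi]
    have hQ1psd : ((1 : Matrix (Fin n) (Fin n) ℝ) - Q).PosSemidef := by
      refine Matrix.PosSemidef.of_dotProduct_mulVec_nonneg ?_ ?_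
      · have hQH : Qᴴ = Q := hQpsd.1
        unfold Matrix.IsHermitian
        rw [Matrix.conjTranspose_sub, hQH, Matrix.conjTranspose_one]
      · intro x
        have hstarx : star x = x := by
          funext i; exact star_trivial _
        set w : Fin n → ℝ := R *ᵥ x with hwdef
        have key1 : x ⬝ᵥ Q *ᵥ x = w ⬝ᵥ P *ᵥ w := by
          have h1 : Q *ᵥ x = R *ᵥ (P *ᵥ w) := by
            rw [hQdef, hwdef, ← Matrix.mulVec_mulVec, ← Matrix.mulVec_mulVec]
          rw [h1, dot_sym_mulVec hRT]
        have key2 : w ⬝ᵥ P *ᵥ w ≤ w ⬝ᵥ X *ᵥ w := by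
          have h1 : 0 ≤ star w ⬝ᵥ (X - P) *ᵥ w := hXP.dotProduct_mulVec_nonneg w
          have hstarw : star w = w := by funext i; exact star_trivial _
          rw [hstarw, Matrix.sub_mulVec, dotProduct_sub] at h1
          linarith
        have key3 : w ⬝ᵥ X *ᵥ w = x ⬝ᵥ Pi' *ᵥ x := by
          rw [← hRXR,
            show (R * X * R) *ᵥ x = R *ᵥ (X *ᵥ w) by
              rw [hwdef, ← Matrix.mulVec_mulVec, ← Matrix.mulVec_mulVec],
            dot_sym_mulVec hRT, ← hwdef]
        have key4 : x ⬝ᵥ Pi' *ᵥ x ≤ x ⬝ᵥ x := by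
          have h1 : 0 ≤ star x ⬝ᵥ (1 - Pi') *ᵥ x := hPi1.dotProduct_mulVec_nonneg x
          rw [hstarx, Matrix.sub_mulVec, dotProduct_sub, Matrix.one_mulVec] at h1
          linarith
        have : x ⬝ᵥ Q *ᵥ x ≤ x ⬝ᵥ x := by
          rw [key1]
          calc w ⬝ᵥ P *ᵥ w ≤ w ⬝ᵥ X *ᵥ w := key2
            _ = x ⬝ᵥ Pi' *ᵥ x := key3
            _ ≤ x ⬝ᵥ x := key4
        rw [hstarx, Matrix.sub_mulVec, dotProduct_sub, Matrix.one_mulVec]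
        linarith
    have hcyc : (P * B).trace = (Q * M).trace := by
      conv_lhs => rw [← hSQS]
      calc (S * Q * S * B).trace = ((S * Q) * (S * B)).trace := by
            simp only [Matrix.mul_assoc]
        _ = ((S * B) * (S * Q)).trace := Matrix.trace_mul_comm _ _
        _ = ((S * B * S) * Q).trace := by simp only [Matrix.mul_assoc]
        _ = (Q * M).trace := Matrix.trace_mul_comm _ _
    rw [hcyc]
    exact trace_mul_le_trPlus hM hQpsd hQ1psd
end
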